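/- arXiv:1910.09482 — 2 statements merged into one kernel-verified Lean document; each statement's English description precedes it below -/
import Mathlib

section
/- For all integers n ≥ 0 and m ≥ 2, sf(n,m) equals the number of partitions of n whose parts have pairwise distinct max m-powers and which contain at most one part not divisible by m. -/
/-- The semi-`m`-Fibonacci numbers: `sfm m 0 = 1`; `sfm m n = sfm m (n / m)` if
`n > 0` and `m ∣ n`; and `sfm m n = sfm m (n - r) + sfm m (n - m)` if
`n ≡ r (mod m)` with `0 < r < m`, where terms with negative argument are `0`
(the value for `m ≤ 1` is junk). -/
def sfm (m : ℕ) : ℕ → ℕ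
  | 0 => 1
  | n + 1 =>
    if m ≤ 1 then 0
    else if (n + 1) % m = 0 then sfm m ((n + 1) / m)
    else sfm m ((n + 1) - (n + 1) % m) +
      if n + 1 < m then 0 else sfm m ((n + 1) - m)
  termination_by n => n
  decreasing_by
  · exact Nat.div_lt_self (Nat.succ_pos n) (by omega)
  · omega
  · omega

/-- The max `m`-power of `N`, i.e. `m ^ s` where `m ^ s` is the largest power
of `m` dividing `N`. -/
def maxMPow (m N : ℕ) : ℕ := m ^ Nat.maxPowDiv m N

/-!
The max `m`-power of a part not divisible by `m` is `1`, so distinct max `m`-powers already allow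
at most one such part, and it suffices to show that partitions with distinct max `m`-powers obey
the recursion of `sfm`. If `m ∣ n`, every part is then divisible by `m`, and dividing all parts
by `m` is a bijection onto the partitions of `n / m`. Otherwise exactly one part `a` is not
divisible by `m`, and `a ≡ n [MOD m]`: either `a = n % m`, and removing it leaves a partition of
`n - n % m`, or `a > m`, and subtracting `m` from it leaves a partition of `n - m`.
-/

open Multiset

lemma Nat.card_subtype_eq_card_and_add_card_and_not {α : Type*} [Finite α] (P Q : α → Prop) :
    Nat.card {x // P x} = Nat.card {x // P x ∧ Q x} + Nat.card {x // P x ∧ ¬ Q x} := by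
  classical
  rw [← Nat.card_congr (Equiv.subtypeSubtypeEquivSubtypeInter P Q),
    ← Nat.card_congr (Equiv.subtypeSubtypeEquivSubtypeInter P (¬ Q ·)), ← Nat.card_sum]
  exact Nat.card_congr (Equiv.sumCompl fun x : {x // P x} => Q x).symm

lemma Nat.Partition.card_subtype_congr_parts {n n' : ℕ} {P Q : Multiset ℕ → Prop}
    (f g : Multiset ℕ → Multiset ℕ)
    (hf : ∀ p : n.Partition, P p.parts →
      (∀ i ∈ f p.parts, 0 < i) ∧ (f p.parts).sum = n' ∧ Q (f p.parts))
    (hg : ∀ q : n'.Partition, Q q.parts →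
      (∀ i ∈ g q.parts, 0 < i) ∧ (g q.parts).sum = n ∧ P (g q.parts))
    (hgf : ∀ p : n.Partition, P p.parts → g (f p.parts) = p.parts)
    (hfg : ∀ q : n'.Partition, Q q.parts → f (g q.parts) = q.parts) :
    Nat.card {p : n.Partition // P p.parts} = Nat.card {q : n'.Partition // Q q.parts} :=
  Nat.card_congr
    { toFun p := ⟨⟨f p.1.parts, (hf p.1 p.2).1 _, (hf p.1 p.2).2.1⟩, (hf p.1 p.2).2.2⟩
      invFun q := ⟨⟨g q.1.parts, (hg q.1 q.2).1 _, (hg q.1 q.2).2.1⟩, (hg q.1 q.2).2.2⟩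
      left_inv p := Subtype.ext <| Nat.Partition.ext (hgf p.1 p.2)
      right_inv q := Subtype.ext <| Nat.Partition.ext (hfg q.1 q.2) }

def DistinctMaxMPow (m : ℕ) (s : Multiset ℕ) : Prop := (s.map (maxMPow m)).Nodup

noncomputable def distinctMaxMPowCount (m n : ℕ) : ℕ :=
  Nat.card {p : n.Partition // DistinctMaxMPow m p.parts}

section maxMPow

variable {m x : ℕ}

lemma maxMPow_eq_pow_padicValNat (m x : ℕ) : maxMPow m x = m ^ padicValNat m x := rfl

lemma maxMPow_of_not_dvd (hx : ¬ m ∣ x) : maxMPow m x = 1 := by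
  rw [maxMPow_eq_pow_padicValNat, padicValNat.eq_zero_of_not_dvd hx, pow_zero]

lemma maxMPow_mul_left (hm : 1 < m) (hx : x ≠ 0) : maxMPow m (m * x) = m * maxMPow m x := by
  rw [maxMPow_eq_pow_padicValNat, maxMPow_eq_pow_padicValNat, padicValNat_base_mul hm hx,
    pow_succ']

lemma maxMPow_ne_one_of_dvd (hm : 1 < m) (hx : x ≠ 0) (h : m ∣ x) : maxMPow m x ≠ 1 := by
  obtain ⟨k, rfl⟩ := h
  rw [maxMPow_mul_left hm (right_ne_zero_of_mul hx)]
  exact fun h1 => hm.ne' (mul_eq_one.1 h1).1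

-- For `x < m` the subtraction truncates to `0`, and `maxMPow m 0 = 1`.
lemma maxMPow_sub_self_of_not_dvd (hx : ¬ m ∣ x) : maxMPow m (x - m) = 1 := by
  rcases le_or_gt m x with hmx | hxm
  · exact maxMPow_of_not_dvd ((Nat.dvd_sub_iff_left hmx dvd_rfl).not.2 hx)
  · rw [Nat.sub_eq_zero_of_le hxm.le, maxMPow_eq_pow_padicValNat, padicValNat_zero_right, pow_zero]

end maxMPow

section shift

variable {m x : ℕ} {s : Multiset ℕ}

def addIfNotDvd (m x : ℕ) : ℕ := if m ∣ x then x else x + m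

def subIfNotDvd (m x : ℕ) : ℕ := if m ∣ x then x else x - m

lemma le_addIfNotDvd (m x : ℕ) : x ≤ addIfNotDvd m x := by
  unfold addIfNotDvd; split_ifs <;> omega

lemma addIfNotDvd_ne_of_lt {r : ℕ} (hr : r < m) (hnr : ¬ m ∣ r) (x : ℕ) :
    addIfNotDvd m x ≠ r := by
  unfold addIfNotDvd
  split_ifs with hx
  · rintro rfl
    exact hnr hx
  · omega

lemma subIfNotDvd_addIfNotDvd (m x : ℕ) : subIfNotDvd m (addIfNotDvd m x) = x := by
  by_cases hx : m ∣ x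
  · simp [addIfNotDvd, subIfNotDvd, hx]
  · simp [addIfNotDvd, subIfNotDvd, hx, Nat.dvd_add_self_right]

lemma addIfNotDvd_subIfNotDvd (hx : ¬ m ∣ x → m ≤ x) :
    addIfNotDvd m (subIfNotDvd m x) = x := by
  by_cases hdvd : m ∣ x
  · simp [addIfNotDvd, subIfNotDvd, hdvd]
  · have hmx := hx hdvd
    have : ¬ m ∣ x - m := (Nat.dvd_sub_iff_left hmx dvd_rfl).not.2 hdvd
    simp [addIfNotDvd, subIfNotDvd, hdvd, this, Nat.sub_add_cancel hmx]

lemma maxMPow_addIfNotDvd (m x : ℕ) : maxMPow m (addIfNotDvd m x) = maxMPow m x := by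
  by_cases hx : m ∣ x
  · simp [addIfNotDvd, hx]
  · rw [addIfNotDvd, if_neg hx, maxMPow_of_not_dvd hx,
      maxMPow_of_not_dvd (Nat.dvd_add_self_right.not.2 hx)]

lemma maxMPow_subIfNotDvd (m x : ℕ) : maxMPow m (subIfNotDvd m x) = maxMPow m x := by
  by_cases hx : m ∣ x
  · simp [subIfNotDvd, hx]
  · rw [subIfNotDvd, if_neg hx, maxMPow_of_not_dvd hx, maxMPow_sub_self_of_not_dvd hx]

lemma sum_map_addIfNotDvd (m : ℕ) (s : Multiset ℕ) :
    (s.map (addIfNotDvd m)).sum = s.sum + m * s.countP (¬ m ∣ ·) := by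
  induction s using Multiset.induction_on with
  | empty => simp
  | cons a s ih =>
    simp only [map_cons, sum_cons, countP_cons, ih, addIfNotDvd]
    split_ifs <;> ring

lemma sum_map_subIfNotDvd (hs : ∀ x ∈ s, ¬ m ∣ x → m ≤ x) :
    (s.map (subIfNotDvd m)).sum + m * s.countP (¬ m ∣ ·) = s.sum := by
  induction s using Multiset.induction_on with
  | empty => simp
  | cons a s ih =>
    have ih := ih fun x hx => hs x (mem_cons_of_mem hx)
    have ha := hs a (mem_cons_self a s)
    simp only [map_cons, sum_cons, countP_cons, subIfNotDvd, ← ih]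
    split_ifs <;> grind

end shift

section atMostOneNotDvd

variable {m a : ℕ} {s : Multiset ℕ}

lemma countP_not_dvd_le_one (h : DistinctMaxMPow m s) : s.countP (¬ m ∣ ·) ≤ 1 :=
  calc s.countP (¬ m ∣ ·)
      ≤ (s.map (maxMPow m)).count 1 := by
        rw [count_map, countP_eq_card_filter]
        exact card_le_card (monotone_filter_right s fun x hx => (maxMPow_of_not_dvd hx).symm)
    _ ≤ 1 := nodup_iff_count_le_one.1 h 1

lemma modEq_sum_of_not_dvd (hs : s.countP (¬ m ∣ ·) ≤ 1) (ha : a ∈ s) (hna : ¬ m ∣ a) :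
    a ≡ s.sum [MOD m] := by
  rw [← cons_erase ha, countP_cons_of_pos (s := s.erase a) hna] at hs
  have hrest : ∀ x ∈ s.erase a, m ∣ x := by
    simpa using countP_eq_zero.1 (by omega : (s.erase a).countP (¬ m ∣ ·) = 0)
  obtain ⟨k, hk⟩ := dvd_sum hrest
  rw [← cons_erase ha, sum_cons, hk, Nat.ModEq, Nat.add_mul_mod_self_left]

lemma dvd_of_dvd_sum (hs : s.countP (¬ m ∣ ·) ≤ 1) (hsum : m ∣ s.sum) (ha : a ∈ s) :
    m ∣ a := by
  by_contra hna
  exact hna <| Nat.modEq_zero_iff_dvd.1 <|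
    (modEq_sum_of_not_dvd hs ha hna).trans (Nat.modEq_zero_iff_dvd.2 hsum)

lemma countP_not_dvd_eq_one (hs : s.countP (¬ m ∣ ·) ≤ 1) (hsum : ¬ m ∣ s.sum) :
    s.countP (¬ m ∣ ·) = 1 := by
  refine le_antisymm hs (Nat.one_le_iff_ne_zero.2 fun h0 => hsum (dvd_sum fun x hx => ?_))
  simpa using countP_eq_zero.1 h0 x hx

end atMostOneNotDvd

section DistinctMaxMPow

variable {m : ℕ} {s : Multiset ℕ}

lemma distinctMaxMPow_map_mul_left_iff (hm : 1 < m) (hs : ∀ x ∈ s, x ≠ 0) :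
    DistinctMaxMPow m (s.map (m * ·)) ↔ DistinctMaxMPow m s := by
  have : (s.map (m * ·)).map (maxMPow m) = (s.map (maxMPow m)).map (m * ·) := by
    simp only [map_map]
    exact map_congr rfl fun x hx => maxMPow_mul_left hm (hs x hx)
  rw [DistinctMaxMPow, DistinctMaxMPow, this,
    nodup_map_iff_of_injective (mul_right_injective₀ (by omega))]

lemma distinctMaxMPow_map_addIfNotDvd_iff :
    DistinctMaxMPow m (s.map (addIfNotDvd m)) ↔ DistinctMaxMPow m s := by
  rw [DistinctMaxMPow, DistinctMaxMPow, map_map]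
  simp only [Function.comp_def, maxMPow_addIfNotDvd]

lemma distinctMaxMPow_map_subIfNotDvd_iff :
    DistinctMaxMPow m (s.map (subIfNotDvd m)) ↔ DistinctMaxMPow m s := by
  rw [DistinctMaxMPow, DistinctMaxMPow, map_map]
  simp only [Function.comp_def, maxMPow_subIfNotDvd]

end DistinctMaxMPow


section distinctMaxMPowCount

variable {m n : ℕ}

lemma distinctMaxMPowCount_zero (m : ℕ) : distinctMaxMPowCount m 0 = 1 := by
  rw [distinctMaxMPowCount, Nat.card_eq_one_iff_unique]
  refine ⟨inferInstance, ⟨⟨default, ?_⟩⟩⟩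
  simp [DistinctMaxMPow, Nat.Partition.partition_zero_parts]

lemma dvd_of_mem_parts_of_dvd {p : n.Partition} (hp : DistinctMaxMPow m p.parts) (h : m ∣ n)
    {x : ℕ} (hx : x ∈ p.parts) : m ∣ x :=
  dvd_of_dvd_sum (countP_not_dvd_le_one hp) (by rwa [p.parts_sum]) hx

lemma map_mul_map_div_of_forall_dvd {s : Multiset ℕ} (hs : ∀ x ∈ s, m ∣ x) :
    (s.map (· / m)).map (m * ·) = s := by
  rw [map_map]
  exact (Multiset.map_congr rfl fun x hx => Nat.mul_div_cancel' (hs x hx)).trans (map_id _)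

lemma distinctMaxMPowCount_of_dvd (hm : 1 < m) (h : m ∣ n) :
    distinctMaxMPowCount m n = distinctMaxMPowCount m (n / m) := by
  refine Nat.Partition.card_subtype_congr_parts (map (· / m)) (map (m * ·)) ?_ ?_ ?_ ?_
  · intro p hp
    have hback := map_mul_map_div_of_forall_dvd fun _ => dvd_of_mem_parts_of_dvd hp h
    have hpos : ∀ i ∈ p.parts.map (· / m), 0 < i := by
      intro i hi
      obtain ⟨x, hx, rfl⟩ := mem_map.1 hi
      exact Nat.div_pos (Nat.le_of_dvd (p.parts_pos hx) (dvd_of_mem_parts_of_dvd hp h hx))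
        (by omega)
    refine ⟨hpos, ?_, ?_⟩
    · have hsum := congrArg Multiset.sum hback
      rw [sum_map_mul_left, map_id', p.parts_sum] at hsum
      exact (Nat.div_eq_of_eq_mul_right (by omega) hsum.symm).symm
    · rwa [← hback, distinctMaxMPow_map_mul_left_iff hm fun i hi => (hpos i hi).ne'] at hp
  · intro q hq
    refine ⟨fun i hi => ?_, ?_, ?_⟩
    · obtain ⟨x, hx, rfl⟩ := mem_map.1 hi
      exact Nat.mul_pos (by omega) (q.parts_pos hx)
    · rw [sum_map_mul_left, map_id', q.parts_sum, Nat.mul_div_cancel' h]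
    · exact (distinctMaxMPow_map_mul_left_iff hm fun x hx => (q.parts_pos hx).ne').2 hq
  · exact fun p hp => map_mul_map_div_of_forall_dvd fun _ => dvd_of_mem_parts_of_dvd hp h
  · intro q _
    rw [map_map]
    exact (Multiset.map_congr rfl fun x _ => Nat.mul_div_cancel_left x (by omega)).trans (map_id _)

lemma card_distinctMaxMPow_and_mod_mem (hm : 1 < m) (h : ¬ m ∣ n) :
    Nat.card {p : n.Partition // DistinctMaxMPow m p.parts ∧ n % m ∈ p.parts} =
      distinctMaxMPowCount m (n - n % m) := by
  have hr : 0 < n % m := Nat.pos_of_ne_zero (mt Nat.dvd_of_mod_eq_zero h)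
  refine Nat.Partition.card_subtype_congr_parts (P := fun s => DistinctMaxMPow m s ∧ n % m ∈ s)
    (erase · (n % m)) (n % m ::ₘ ·) ?_ ?_ ?_ ?_
  · rintro p ⟨hp, hrp⟩
    refine ⟨fun i hi => p.parts_pos (mem_of_mem_erase hi), ?_, ?_⟩
    · have := sum_erase hrp
      rw [p.parts_sum] at this
      omega
    · exact nodup_of_le (map_le_map (erase_le _ _)) hp
  · intro q hq
    refine ⟨fun i hi => ?_, ?_, ?_, mem_cons_self _ _⟩
    · rcases mem_cons.1 hi with rfl | hi
      exacts [hr, q.parts_pos hi]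
    · rw [sum_cons, q.parts_sum]
      have := Nat.mod_le n m
      omega
    · rw [DistinctMaxMPow, map_cons, nodup_cons,
        maxMPow_of_not_dvd ((Nat.dvd_mod_iff dvd_rfl).not.2 h)]
      refine ⟨fun h1 => ?_, hq⟩
      obtain ⟨x, hx, hx1⟩ := mem_map.1 h1
      exact maxMPow_ne_one_of_dvd hm (q.parts_pos hx).ne'
        (dvd_of_mem_parts_of_dvd hq (Nat.dvd_sub_mod n) hx) hx1
  · exact fun p hp => cons_erase hp.2
  · exact fun q _ => erase_cons_head _ _

lemma countP_parts_not_dvd_eq_one {p : n.Partition} (hp : DistinctMaxMPow m p.parts)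
    (h : ¬ m ∣ n) : p.parts.countP (¬ m ∣ ·) = 1 :=
  countP_not_dvd_eq_one (countP_not_dvd_le_one hp) (by rwa [p.parts_sum])

lemma lt_of_mem_parts_of_not_dvd {p : n.Partition} (hp : DistinctMaxMPow m p.parts)
    (hr : n % m ∉ p.parts) {x : ℕ} (hx : x ∈ p.parts) (hnx : ¬ m ∣ x) : m < x := by
  have hmod : x % m = n % m :=
    p.parts_sum ▸ modEq_sum_of_not_dvd (countP_not_dvd_le_one hp) hx hnx
  by_contra! hxm
  rcases hxm.lt_or_eq with hxm | rfl
  · exact hr (by rwa [← hmod, Nat.mod_eq_of_lt hxm])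
  · exact hnx dvd_rfl

lemma card_distinctMaxMPow_and_mod_not_mem_of_lt (h : ¬ m ∣ n) (hn : n < m) :
    Nat.card {p : n.Partition // DistinctMaxMPow m p.parts ∧ n % m ∉ p.parts} = 0 := by
  refine Nat.card_eq_zero.2 (Or.inl ⟨fun ⟨p, hp, hr⟩ => ?_⟩)
  obtain ⟨x, hx, hnx⟩ := countP_pos.1 (countP_parts_not_dvd_eq_one hp h).ge
  have hxn := le_sum_of_mem hx
  rw [p.parts_sum] at hxn
  have := lt_of_mem_parts_of_not_dvd hp hr hx hnx
  omega

lemma card_distinctMaxMPow_and_mod_not_mem (hm : 0 < m) (h : ¬ m ∣ n) (hmn : m ≤ n) :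
    Nat.card {p : n.Partition // DistinctMaxMPow m p.parts ∧ n % m ∉ p.parts} =
      distinctMaxMPowCount m (n - m) := by
  refine Nat.Partition.card_subtype_congr_parts (P := fun s => DistinctMaxMPow m s ∧ n % m ∉ s)
    (map (subIfNotDvd m)) (map (addIfNotDvd m)) ?_ ?_ ?_ ?_
  · rintro p ⟨hp, hrp⟩
    have hlt : ∀ x ∈ p.parts, ¬ m ∣ x → m < x := fun x hx hnx =>
      lt_of_mem_parts_of_not_dvd hp hrp hx hnx
    refine ⟨fun i hi => ?_, ?_, distinctMaxMPow_map_subIfNotDvd_iff.2 hp⟩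
    · obtain ⟨x, hx, rfl⟩ := mem_map.1 hi
      by_cases hnx : m ∣ x
      · simpa [subIfNotDvd, hnx] using p.parts_pos hx
      · simpa [subIfNotDvd, hnx] using hlt x hx hnx
    · have := sum_map_subIfNotDvd fun x hx hnx => (hlt x hx hnx).le
      rw [countP_parts_not_dvd_eq_one hp h, p.parts_sum] at this
      omega
  · intro q hq
    have hnd : ¬ m ∣ n - m := (Nat.dvd_sub_iff_left hmn dvd_rfl).not.2 h
    refine ⟨fun i hi => ?_, ?_, distinctMaxMPow_map_addIfNotDvd_iff.2 hq, fun hmem => ?_⟩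
    · obtain ⟨x, hx, rfl⟩ := mem_map.1 hi
      exact (q.parts_pos hx).trans_le (le_addIfNotDvd m x)
    · rw [sum_map_addIfNotDvd, countP_parts_not_dvd_eq_one hq hnd, q.parts_sum]
      omega
    · obtain ⟨x, -, hxr⟩ := mem_map.1 hmem
      exact addIfNotDvd_ne_of_lt (Nat.mod_lt n hm) ((Nat.dvd_mod_iff dvd_rfl).not.2 h) x hxr
  · rintro p ⟨hp, hrp⟩
    rw [map_map]
    exact (Multiset.map_congr rfl fun x hx => addIfNotDvd_subIfNotDvd fun hnx =>
      (lt_of_mem_parts_of_not_dvd hp hrp hx hnx).le).trans (map_id _)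
  · intro q _
    rw [map_map]
    exact (Multiset.map_congr rfl fun x _ => subIfNotDvd_addIfNotDvd m x).trans (map_id _)

lemma distinctMaxMPowCount_of_not_dvd (hm : 1 < m) (h : ¬ m ∣ n) :
    distinctMaxMPowCount m n =
      distinctMaxMPowCount m (n - n % m) + if n < m then 0 else distinctMaxMPowCount m (n - m) := by
  rw [distinctMaxMPowCount, Nat.card_subtype_eq_card_and_add_card_and_not _ (n % m ∈ ·.parts),
    card_distinctMaxMPow_and_mod_mem hm h]
  split_ifs with hn
  · rw [card_distinctMaxMPow_and_mod_not_mem_of_lt h hn]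
  · rw [card_distinctMaxMPow_and_mod_not_mem (by omega) h (not_lt.1 hn)]

end distinctMaxMPowCount

section sfm

variable {m n : ℕ}

lemma sfm_zero : sfm m 0 = 1 := by
  rw [sfm]

lemma sfm_of_dvd (hm : 1 < m) (hn : n ≠ 0) (h : m ∣ n) :
    sfm m n = sfm m (n / m) := by
  obtain ⟨k, rfl⟩ := Nat.exists_eq_succ_of_ne_zero hn
  rw [sfm, if_neg (by omega), if_pos (Nat.mod_eq_zero_of_dvd h)]

lemma sfm_of_not_dvd (hm : 1 < m) (h : ¬ m ∣ n) :
    sfm m n = sfm m (n - n % m) + if n < m then 0 else sfm m (n - m) := by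
  obtain ⟨k, rfl⟩ := Nat.exists_eq_succ_of_ne_zero (n := n) fun h0 => h (h0 ▸ dvd_zero m)
  rw [sfm, if_neg (by omega), if_neg (mt Nat.dvd_of_mod_eq_zero h)]

lemma sfm_eq_distinctMaxMPowCount (hm : 1 < m) :
    sfm m n = distinctMaxMPowCount m n := by
  induction n using Nat.strong_induction_on with
  | _ n ih =>
    rcases Nat.eq_zero_or_pos n with rfl | hn
    · rw [sfm_zero, distinctMaxMPowCount_zero]
    by_cases h : m ∣ n
    · rw [sfm_of_dvd hm hn.ne' h, distinctMaxMPowCount_of_dvd hm h, ih _ (Nat.div_lt_self hn hm)]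
    · have hr : 0 < n % m := Nat.pos_of_ne_zero (mt Nat.dvd_of_mod_eq_zero h)
      rw [sfm_of_not_dvd hm h, distinctMaxMPowCount_of_not_dvd hm h, ih _ (by omega)]
      split_ifs with hnm
      · rfl
      · rw [ih _ (by omega)]

end sfm

theorem sfm_eq_card_distinct_maxMPow (n m : ℕ) (hm : 2 ≤ m) :
    sfm m n = Nat.card {p : n.Partition //
      (p.parts.map fun x => maxMPow m x).Nodup ∧
      p.parts.countP (fun x => ¬ m ∣ x) ≤ 1} := by
  rw [sfm_eq_distinctMaxMPowCount hm]
  exact Nat.card_congr <| Equiv.subtypeEquivRight fun p =>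
    ⟨fun hp => ⟨hp, countP_not_dvd_le_one hp⟩, And.left⟩
end

section
/- For every integer j ≥ 0 and every integer r ≥ 2, sf(3^r · j + 4, 3) = sf(3^r · j + 5, 3) and sf(3^r · j + 4, 3) ≡ 0 (mod 2). -/
lemma sfm3_succ (n : ℕ) : sfm 3 (n+1) =
    if (n+1) % 3 = 0 then sfm 3 ((n+1)/3)
    else sfm 3 ((n+1) - (n+1) % 3) + if n+1 < 3 then 0 else sfm 3 (n+1-3) := by
  rw [sfm]; norm_num

lemma sfm3_one : sfm 3 1 = 1 := by rw [sfm3_succ]; norm_num; rw [sfm]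

lemma sfm3_two : sfm 3 2 = 1 := by
  have := sfm3_succ 1
  norm_num at this
  rw [this]; rw [sfm]

lemma sfm3_mul3 (n : ℕ) (h : 0 < n) : sfm 3 (3*n) = sfm 3 n := by
  obtain ⟨k, rfl⟩ : ∃ k, n = k + 1 := ⟨n - 1, by omega⟩
  have e : 3*(k+1) = (3*k+2) + 1 := by ring
  rw [e, sfm3_succ]
  have h1 : (3*k+2+1) % 3 = 0 := by omega
  simp [h1]
  congr 1
  omega

lemma sfm3_mod1 (n : ℕ) (h : n % 3 = 1) (h3 : 3 ≤ n) :
    sfm 3 n = sfm 3 (n-1) + sfm 3 (n-3) := by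
  obtain ⟨k, rfl⟩ : ∃ k, n = k + 1 := ⟨n - 1, by omega⟩
  rw [sfm3_succ]
  have h2 : ¬ (k+1) % 3 = 0 := by omega
  have h4 : ¬ (k+1) < 3 := by omega
  simp [h2, h4, h]

lemma sfm3_mod2 (n : ℕ) (h : n % 3 = 2) (h3 : 3 ≤ n) :
    sfm 3 n = sfm 3 (n-2) + sfm 3 (n-3) := by
  obtain ⟨k, rfl⟩ : ∃ k, n = k + 1 := ⟨n - 1, by omega⟩
  rw [sfm3_succ]
  have h2 : ¬ (k+1) % 3 = 0 := by omega
  have h4 : ¬ (k+1) < 3 := by omega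
  simp [h2, h4, h]

/-- Key equality: `sf(3m+1) = sf(3m+2)`. -/
lemma sfm3_key : ∀ m : ℕ, sfm 3 (3*m+1) = sfm 3 (3*m+2) := by
  intro m
  induction m using Nat.strong_induction_on with
  | _ m ih =>
    match m with
    | 0 => simp [sfm3_one, sfm3_two]
    | k+1 =>
      have e1 : sfm 3 (3*(k+1)+1) = sfm 3 (3*k+3) + sfm 3 (3*k+1) := by
        have := sfm3_mod1 (3*(k+1)+1) (by omega) (by omega)
        rw [this]; congr 1 <;> congr 1 <;> omega
      have e2 : sfm 3 (3*(k+1)+2) = sfm 3 (3*k+3) + sfm 3 (3*k+2) := by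
        have := sfm3_mod2 (3*(k+1)+2) (by omega) (by omega)
        rw [this]; congr 1 <;> congr 1 <;> omega
      rw [e1, e2, ih k (by omega)]

/-- Parity lemma: `sf(9n+1) ≡ sf(9n+7) ≡ sf(3n+1) (mod 2)`. -/
lemma sfm3_parity : ∀ n : ℕ,
    sfm 3 (9*n+1) % 2 = sfm 3 (3*n+1) % 2 ∧
    sfm 3 (9*n+7) % 2 = sfm 3 (3*n+1) % 2 := by
  intro n
  induction n using Nat.strong_induction_on with
  | _ n ih =>
    have part1 : sfm 3 (9*n+1) % 2 = sfm 3 (3*n+1) % 2 := by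
      match n with
      | 0 => simp
      | k+1 =>
        have e1 : sfm 3 (9*(k+1)+1) = sfm 3 (9*k+9) + sfm 3 (9*k+7) := by
          have := sfm3_mod1 (9*(k+1)+1) (by omega) (by omega)
          rw [this]; congr 1 <;> congr 1 <;> omega
        have e2 : sfm 3 (9*k+9) = sfm 3 (3*k+3) := by
          have := sfm3_mul3 (3*k+3) (by omega)
          rw [show 9*k+9 = 3*(3*k+3) by ring, this]
        have e3 : sfm 3 (3*(k+1)+1) = sfm 3 (3*k+3) + sfm 3 (3*k+1) := by
          have := sfm3_mod1 (3*(k+1)+1) (by omega) (by omega)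
          rw [this]; congr 1 <;> congr 1 <;> omega
        have ih2 := (ih k (by omega)).2
        rw [e1, e2, e3]
        omega
    refine ⟨part1, ?_⟩
    have e1 : sfm 3 (9*n+7) = sfm 3 (9*n+6) + sfm 3 (9*n+4) := by
      have := sfm3_mod1 (9*n+7) (by omega) (by omega)
      rw [this]; congr 1 <;> congr 1 <;> omega
    have e2 : sfm 3 (9*n+6) = sfm 3 (3*n+1) := by
      rw [show 9*n+6 = 3*(3*n+2) by ring, sfm3_mul3 (3*n+2) (by omega), ← sfm3_key]
    have e3 : sfm 3 (9*n+4) = sfm 3 (9*n+3) + sfm 3 (9*n+1) := by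
      have := sfm3_mod1 (9*n+4) (by omega) (by omega)
      rw [this]; congr 1 <;> congr 1 <;> omega
    have e4 : sfm 3 (9*n+3) = sfm 3 (3*n+1) := by
      rw [show 9*n+3 = 3*(3*n+1) by ring, sfm3_mul3 (3*n+1) (by omega)]
    rw [e1, e2, e3, e4]
    omega

theorem sfm_three_pow_cong (j r : ℕ) (hr : 2 ≤ r) :
    sfm 3 (3 ^ r * j + 4) = sfm 3 (3 ^ r * j + 5) ∧
    sfm 3 (3 ^ r * j + 4) % 2 = 0 := by
  obtain ⟨n, hn⟩ : ∃ n, 3 ^ r * j = 9 * n := by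
    obtain ⟨s, rfl⟩ : ∃ s, r = s + 2 := ⟨r-2, by omega⟩
    exact ⟨3 ^ s * j, by rw [pow_add]; ring⟩
  rw [hn]
  have e1 : sfm 3 (9*n+4) = sfm 3 (9*n+3) + sfm 3 (9*n+1) := by
    have := sfm3_mod1 (9*n+4) (by omega) (by omega)
    rw [this]; congr 1 <;> congr 1 <;> omega
  have e2 : sfm 3 (9*n+5) = sfm 3 (9*n+3) + sfm 3 (9*n+2) := by
    have := sfm3_mod2 (9*n+5) (by omega) (by omega)
    rw [this]; congr 1 <;> congr 1 <;> omega
  have e3 : sfm 3 (9*n+2) = sfm 3 (9*n+1) := by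
    rw [show 9*n+2 = 3*(3*n)+2 by ring, ← sfm3_key, show 3*(3*n)+1 = 9*n+1 by ring]
  have e4 : sfm 3 (9*n+3) = sfm 3 (3*n+1) := by
    rw [show 9*n+3 = 3*(3*n+1) by ring, sfm3_mul3 (3*n+1) (by omega)]
  have hp := (sfm3_parity n).1
  constructor
  · rw [e1, e2, e3]
  · rw [e1, e4]
    omega
end
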